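/- arXiv:2305.04918 — 2 statements merged into one kernel-verified Lean document; each statement's English description precedes it below -/
import Mathlib

section
/- Let G be a bi-matrix game on n pure strategies with all payoff entries in [0,1], let M > 0 and θ ≥ 1/M, and let ε ≥ 0. If (x*, y*) is a (θ, ε)-restricted disjoint equilibrium of G, then (x*, y*) is an ε-Nash equilibrium of the diagonally modified game D^M(G) (and it has disjoint supports). -/
open Finset

/-- The probability simplex over a finite strategy set `S`. -/
def simplex (S : Type*) [Fintype S] : Set (S → ℝ) :=
  {x | (∀ i, 0 ≤ x i) ∧ ∑ i, x i = 1}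

/-- Expected payoff `Σᵢⱼ xᵢ yⱼ A i j`. -/
def payoff {S : Type*} [Fintype S] (A : S → S → ℝ) (x y : S → ℝ) : ℝ :=
  ∑ i, ∑ j, x i * y j * A i j

/-- The point mass at pure strategy `s`. -/
def pureStrat {S : Type*} [DecidableEq S] (s : S) : S → ℝ :=
  fun i => if i = s then 1 else 0

/-- Support of a mixed strategy. -/
def supp {S : Type*} (x : S → ℝ) : Set S := {i | 0 < x i}

/-- L1 distance between mixed strategies. -/
def dist1 {S : Type*} [Fintype S] (x y : S → ℝ) : ℝ := ∑ i, |x i - y i|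

/-- `(x, y)` is an ε-Nash equilibrium of the bi-matrix game `(R, C)`. -/
def IsEpsNash {S : Type*} [Fintype S] [DecidableEq S]
    (R C : S → S → ℝ) (x y : S → ℝ) (ε : ℝ) : Prop :=
  x ∈ simplex S ∧ y ∈ simplex S ∧
  (∀ s : S, payoff R (pureStrat s) y ≤ payoff R x y + ε) ∧
  (∀ s : S, payoff C x (pureStrat s) ≤ payoff C x y + ε)

/-- `(x, y)` is an ε-constrained disjoint equilibrium: the supports are disjoint
and neither player can gain more than ε by deviating to a mixed strategy whose
support is disjoint from the opponent's support. -/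
def IsConstrainedDisjointEq {S : Type*} [Fintype S]
    (R C : S → S → ℝ) (x y : S → ℝ) (ε : ℝ) : Prop :=
  x ∈ simplex S ∧ y ∈ simplex S ∧ supp x ∩ supp y = ∅ ∧
  (∀ x' ∈ simplex S, supp x' ∩ supp y = ∅ → payoff R x' y ≤ payoff R x y + ε) ∧
  (∀ y' ∈ simplex S, supp y' ∩ supp x = ∅ → payoff C x y' ≤ payoff C x y + ε)

/-- The diagonally modified payoff matrix: all diagonal entries replaced by `-M`. -/
def diagMod {n : ℕ} (A : Fin n → Fin n → ℝ) (M : ℝ) : Fin n → Fin n → ℝ :=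
  fun i j => if i = j then -M else A i j

/-- A (θ, ε)-restricted disjoint equilibrium: an ε-constrained disjoint equilibrium
in which every strictly positive coordinate of `x` and of `y` exceeds θ. -/
def IsRestrictedDisjointEq {S : Type*} [Fintype S]
    (R C : S → S → ℝ) (x y : S → ℝ) (θ ε : ℝ) : Prop :=
  IsConstrainedDisjointEq R C x y ε ∧
  (∀ i, 0 < x i → θ < x i) ∧ (∀ i, 0 < y i → θ < y i)

/-!
A profile with disjoint supports never meets a diagonal entry, so `D^M(G)` pays on it exactly what
`G` does: the equilibrium payoffs agree, and a pure deviation off the opponent's support is one of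
the constrained deviations. A pure deviation `s` onto the opponent's support meets `-M` against a
coordinate `y s > θ ≥ 1/M`, so it earns at most `1 - M * y s ≤ 0`, below the equilibrium payoff.
The column player's case is the row player's case in the transposed game.
-/

section General

variable {S : Type*} [Fintype S]

lemma payoff_swap (A : S → S → ℝ) (x y : S → ℝ) :
    payoff (Function.swap A) y x = payoff A x y := by
  unfold payoff
  rw [Finset.sum_comm]
  exact Finset.sum_congr rfl fun i _ => Finset.sum_congr rfl fun j _ => by
    simp only [Function.swap]; ring

lemma payoff_nonneg {A : S → S → ℝ} (hA : ∀ i j, 0 ≤ A i j) {x y : S → ℝ}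
    (hx : x ∈ simplex S) (hy : y ∈ simplex S) : 0 ≤ payoff A x y :=
  Finset.sum_nonneg fun i _ => Finset.sum_nonneg fun j _ =>
    mul_nonneg (mul_nonneg (hx.1 i) (hy.1 j)) (hA i j)

omit [Fintype S] in
lemma mul_eq_zero_of_supp_inter_eq_empty {x y : S → ℝ} (hx : ∀ i, 0 ≤ x i)
    (hy : ∀ i, 0 ≤ y i) (hxy : supp x ∩ supp y = ∅) (i : S) : x i * y i = 0 := by
  rcases (hx i).eq_or_lt with hxi | hxi
  · rw [← hxi, zero_mul]
  · have hyi : i ∉ supp y := fun hyi => (Set.eq_empty_iff_forall_notMem.mp hxy) i ⟨hxi, hyi⟩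
    rw [le_antisymm (not_lt.mp hyi) (hy i), mul_zero]

variable [DecidableEq S]

lemma payoff_pureStrat_left (A : S → S → ℝ) (s : S) (y : S → ℝ) :
    payoff A (pureStrat s) y = ∑ j, y j * A s j := by
  simp [payoff, pureStrat, ite_mul]

lemma pureStrat_mem_simplex (s : S) : pureStrat s ∈ simplex S :=
  ⟨fun i => by unfold pureStrat; split_ifs <;> norm_num, by simp [pureStrat]⟩

omit [Fintype S] in
lemma supp_pureStrat (s : S) : supp (pureStrat s) = {s} := by
  ext i
  by_cases h : i = s <;> simp [supp, pureStrat, h]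

end General

section DiagMod

variable {n : ℕ}

lemma diagMod_swap (A : Fin n → Fin n → ℝ) (M : ℝ) :
    diagMod (Function.swap A) M = Function.swap (diagMod A M) := by
  ext i j
  simp only [diagMod, Function.swap, eq_comm (a := i)]

lemma payoff_diagMod_of_supp_inter_eq_empty (A : Fin n → Fin n → ℝ) (M : ℝ)
    {x y : Fin n → ℝ} (hx : ∀ i, 0 ≤ x i) (hy : ∀ i, 0 ≤ y i)
    (hxy : supp x ∩ supp y = ∅) : payoff (diagMod A M) x y = payoff A x y := by
  refine Finset.sum_congr rfl fun i _ => Finset.sum_congr rfl fun j _ => ?_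
  by_cases hij : i = j
  · subst hij
    simp [diagMod, mul_eq_zero_of_supp_inter_eq_empty hx hy hxy i]
  · simp [diagMod, hij]

lemma payoff_diagMod_pureStrat_nonpos {A : Fin n → Fin n → ℝ} (hA : ∀ i j, A i j ≤ 1)
    {M : ℝ} (hM : 0 < M) {y : Fin n → ℝ} (hy : y ∈ simplex (Fin n)) {s : Fin n}
    (hys : 1 / M ≤ y s) : payoff (diagMod A M) (pureStrat s) y ≤ 0 := by
  have hterm : ∀ j, y j * diagMod A M s j ≤ y j - if s = j then M * y s else 0 := by
    intro j
    by_cases hj : s = j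
    · subst hj; simp only [diagMod, if_true]; nlinarith [hy.1 s]
    · simp only [diagMod, hj, if_false, sub_zero]
      exact mul_le_of_le_one_right (hy.1 j) (hA s j)
  have hMy : 1 ≤ M * y s := by rw [div_le_iff₀ hM] at hys; linarith
  calc payoff (diagMod A M) (pureStrat s) y = ∑ j, y j * diagMod A M s j :=
        payoff_pureStrat_left _ _ _
    _ ≤ ∑ j, (y j - if s = j then M * y s else 0) := Finset.sum_le_sum fun j _ => hterm j
    _ = 1 - M * y s := by rw [Finset.sum_sub_distrib, hy.2, Finset.sum_ite_eq, if_pos (mem_univ s)]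
    _ ≤ 0 := by linarith

lemma payoff_diagMod_pureStrat_left_le {A : Fin n → Fin n → ℝ}
    (hA : ∀ i j, A i j ∈ Set.Icc (0 : ℝ) 1) {M θ ε : ℝ} (hM : 0 < M) (hθ : 1 / M ≤ θ)
    (hε : 0 ≤ ε) {x y : Fin n → ℝ} (hx : x ∈ simplex (Fin n)) (hy : y ∈ simplex (Fin n))
    (hxy : supp x ∩ supp y = ∅) (hyθ : ∀ i, 0 < y i → θ < y i)
    (hdev : ∀ x' ∈ simplex (Fin n), supp x' ∩ supp y = ∅ → payoff A x' y ≤ payoff A x y + ε)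
    (s : Fin n) : payoff (diagMod A M) (pureStrat s) y ≤ payoff (diagMod A M) x y + ε := by
  rw [payoff_diagMod_of_supp_inter_eq_empty A M hx.1 hy.1 hxy]
  by_cases hs : 0 < y s
  · have hnonpos := payoff_diagMod_pureStrat_nonpos (fun i j => (hA i j).2) hM hy
      (hθ.trans (hyθ s hs).le)
    linarith [payoff_nonneg (fun i j => (hA i j).1) hx hy]
  · have hsy : supp (pureStrat s) ∩ supp y = ∅ := by
      rwa [supp_pureStrat, Set.singleton_inter_eq_empty]
    rw [payoff_diagMod_of_supp_inter_eq_empty A M (pureStrat_mem_simplex s).1 hy.1 hsy]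
    exact hdev _ (pureStrat_mem_simplex s) hsy

end DiagMod

theorem stmt9 {n : ℕ} (R C : Fin n → Fin n → ℝ)
    (hR : ∀ i j, R i j ∈ Set.Icc (0 : ℝ) 1) (hC : ∀ i j, C i j ∈ Set.Icc (0 : ℝ) 1)
    (M θ ε : ℝ) (hM : 0 < M) (hθ : 1 / M ≤ θ) (hε : 0 ≤ ε)
    (x y : Fin n → ℝ) (h : IsRestrictedDisjointEq R C x y θ ε) :
    IsEpsNash (diagMod R M) (diagMod C M) x y ε ∧ supp x ∩ supp y = ∅ := by
  obtain ⟨⟨hx, hy, hxy, hdevR, hdevC⟩, hxθ, hyθ⟩ := h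
  refine ⟨⟨hx, hy, payoff_diagMod_pureStrat_left_le hR hM hθ hε hx hy hxy hyθ hdevR, ?_⟩, hxy⟩
  intro s
  have hdevCswap : ∀ y' ∈ simplex (Fin n), supp y' ∩ supp x = ∅ →
      payoff (Function.swap C) y' x ≤ payoff (Function.swap C) y x + ε := by
    simpa only [payoff_swap] using hdevC
  have hcol := payoff_diagMod_pureStrat_left_le (fun i j => hC j i) hM hθ hε hy hx
    (Set.inter_comm _ _ ▸ hxy) hxθ hdevCswap s
  simpa only [diagMod_swap, payoff_swap] using hcol
end

section
/- Let φ be a 3CNF formula with n ≥ 4 variables and ε = 1/(2n³). In any ε-Nash equilibrium (x, y) of SV(φ) in which both players' expected payoffs are at least n − 1 − ε, for each player and each pair of complementary literals l, −l ∈ L, one of the two is played with probability at least 1/n − 2ε − 1/n² while the other is played with probability less than 1/n². -/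
open Finset

/-- A literal over `n` variables: a variable together with a sign
(`true` = the positive literal, `false` = the negated literal). -/
abbrev Lit (n : ℕ) := Fin n × Bool

/-- Negation of a literal. -/
def negLit {n : ℕ} (l : Lit n) : Lit n := (l.1, !l.2)

/-- A 3CNF formula with `n` variables and `m` clauses; each clause is a set of
exactly 3 literals. -/
structure CNF3 (n m : ℕ) where
  clause : Fin m → Finset (Lit n)
  card3 : ∀ c, (clause c).card = 3

/-- An assignment `a` satisfies a clause if some literal of the clause is true under `a`. -/
def SatAssign {n m : ℕ} (φ : CNF3 n m) (a : Fin n → Bool) : Prop :=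
  ∀ c, ∃ l ∈ φ.clause c, a l.1 = l.2

/-- Satisfiability of a 3CNF formula. -/
def CNF3.Satisfiable {n m : ℕ} (φ : CNF3 n m) : Prop :=
  ∃ a : Fin n → Bool, SatAssign φ a

/-- Strategy set of the game `SV(φ)`: literals, variables, and clauses. -/
abbrev SVStrat (n m : ℕ) := Lit n ⊕ (Fin n ⊕ Fin m)

/-- The row player's payoff in the game `SV(φ)`. -/
def svU1 {n m : ℕ} (φ : CNF3 n m) : SVStrat n m → SVStrat n m → ℝ
  | Sum.inl a, Sum.inl b => if a = negLit b then (n : ℝ) - 4 else (n : ℝ) - 1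
  | Sum.inl _, Sum.inr _ => (n : ℝ) - 4
  | Sum.inr (Sum.inl w), Sum.inl l => if l.1 = w then 0 else (n : ℝ)
  | Sum.inr (Sum.inr c), Sum.inl l => if l ∈ φ.clause c then 0 else (n : ℝ)
  | Sum.inr _, Sum.inr _ => (n : ℝ) - 4

/-- The column player's payoff in the symmetric game `SV(φ)`. -/
def svU2 {n m : ℕ} (φ : CNF3 n m) (a b : SVStrat n m) : ℝ := svU1 φ b a

/-!
Against a mixed strategy `z`, a literal `a` earns `n - 1 - 3 z(V ∪ C) - 3 z(-a)`, and every
variable or clause earns at most `n - 4 z(V ∪ C)`. Hence both payoffs can reach `n - 1 - ε` only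
if the players put total weight at most `ε` on `V ∪ C` and the clash `Σ_a x(a) y(-a)` is at
most `ε/3`. Deviating to the variable `v(l)` then shows that each player puts weight at least
`(1 - 2ε)/n` on `{l, -l}`. If one player gave both `l` and `-l` weight at least `1/n²`, the clash
would be at least `(1 - 2ε)/n³ = 2ε(1 - 2ε) > ε/3`.
-/

section Game

variable {S : Type*} [Fintype S]

lemma payoff_eq_sum_mul_sum (A : S → S → ℝ) (x y : S → ℝ) :
    payoff A x y = ∑ i, x i * ∑ j, y j * A i j := by
  simp only [payoff, Finset.mul_sum, mul_assoc]

lemma payoff_transpose (A : S → S → ℝ) (x y : S → ℝ) :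
    payoff (fun a b => A b a) x y = payoff A y x := by
  unfold payoff
  rw [Finset.sum_comm]
  exact Finset.sum_congr rfl fun _ _ => Finset.sum_congr rfl fun _ _ => by ring

variable [DecidableEq S]

lemma payoff_pureStrat_right (A : S → S → ℝ) (x : S → ℝ) (s : S) :
    payoff A x (pureStrat s) = ∑ i, x i * A i s := by
  simp [payoff, pureStrat]

theorem IsEpsNash.symm {A : S → S → ℝ} {x y : S → ℝ} {ε : ℝ}
    (h : IsEpsNash A (fun a b => A b a) x y ε) : IsEpsNash A (fun a b => A b a) y x ε := by
  obtain ⟨hx, hy, hrow, hcol⟩ := h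
  refine ⟨hy, hx, fun s => ?_, fun s => ?_⟩
  · simpa only [payoff_pureStrat_left, payoff_pureStrat_right, payoff_transpose] using hcol s
  · simpa only [payoff_pureStrat_left, payoff_pureStrat_right, payoff_transpose] using hrow s

end Game

section Literals

variable {n : ℕ}

@[simp]
lemma negLit_negLit (l : Lit n) : negLit (negLit l) = l := by
  simp [negLit]

lemma negLit_involutive : Function.Involutive (negLit (n := n)) := negLit_negLit

lemma negLit_ne (l : Lit n) : negLit l ≠ l := by
  simp [negLit, Prod.ext_iff]

lemma filter_fst_eq_pair_negLit (l : Lit n) :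
    univ.filter (fun b : Lit n => b.1 = l.1) = {l, negLit l} := by
  obtain ⟨w, t⟩ := l
  ext ⟨v, s⟩
  cases s <;> cases t <;> simp [negLit]

end Literals

lemma dichotomy_of_clash_le {N ε a b p q : ℝ} (hN : 2 ≤ N) (hε : ε = 1 / (2 * N ^ 3))
    (hp : 0 ≤ p) (hq : 0 ≤ q) (hab : 1 - 2 * ε ≤ N * (a + b))
    (hpq : 1 - 2 * ε ≤ N * (p + q)) (hclash : 3 * (p * b + q * a) ≤ ε) :
    (1 / N - 2 * ε - 1 / N ^ 2 ≤ a ∧ b < 1 / N ^ 2) ∨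
      (1 / N - 2 * ε - 1 / N ^ 2 ≤ b ∧ a < 1 / N ^ 2) := by
  have hN0 : 0 < N := by linarith
  have hεN : 2 * ε * N ^ 3 = 1 := by rw [hε]; field_simp
  have hε0 : 0 < ε := by rw [hε]; positivity
  have hε_small : ε ≤ 1 / 16 := by
    rw [hε]; gcongr; nlinarith [mul_le_mul hN hN (by norm_num) hN0.le]
  have not_both : ¬ (1 / N ^ 2 ≤ a ∧ 1 / N ^ 2 ≤ b) := by
    rintro ⟨ha, hb⟩
    have hpb := mul_le_mul_of_nonneg_left hb hp
    have hqa := mul_le_mul_of_nonneg_left ha hq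
    have hmass : 3 * (N * (p + q)) ≤ ε * N ^ 3 :=
      calc 3 * (N * (p + q)) = 3 * (p + q) * (1 / N ^ 2) * N ^ 3 := by field_simp
        _ ≤ ε * N ^ 3 := mul_le_mul_of_nonneg_right (by linarith) (by positivity)
    linarith
  have lower : ∀ {u v : ℝ}, 1 - 2 * ε ≤ N * (u + v) → v < 1 / N ^ 2 →
      1 / N - 2 * ε - 1 / N ^ 2 ≤ u := by
    intro u v huv hv
    have hNv : N * v ≤ 1 / N := by
      calc N * v ≤ N * (1 / N ^ 2) := mul_le_mul_of_nonneg_left hv.le hN0.le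
        _ = 1 / N := by field_simp
    have hεN1 : 2 * ε / N ≤ 2 * ε := div_le_self (by positivity) (by linarith)
    have : (1 - 2 * ε - 1 / N) / N ≤ u := by
      rw [div_le_iff₀ hN0]; linarith
    calc 1 / N - 2 * ε - 1 / N ^ 2 ≤ (1 - 2 * ε - 1 / N) / N := by
          rw [sub_div, sub_div, div_div, ← sq]; linarith
      _ ≤ u := this
  by_cases hb : b < 1 / N ^ 2
  · exact Or.inl ⟨lower hab hb, hb⟩
  · have ha : a < 1 / N ^ 2 := by
      by_contra ha
      exact not_both ⟨not_lt.1 ha, not_lt.1 hb⟩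
    exact Or.inr ⟨lower (by linarith) ha, ha⟩

namespace SV

variable {n m : ℕ}

def nonLitMass (z : SVStrat n m → ℝ) : ℝ := ∑ r : Fin n ⊕ Fin m, z (Sum.inr r)

def clash (x y : SVStrat n m → ℝ) : ℝ := ∑ a : Lit n, x (Sum.inl a) * y (Sum.inl (negLit a))

variable {x y z : SVStrat n m → ℝ}

lemma nonLitMass_nonneg (hz : z ∈ simplex (SVStrat n m)) : 0 ≤ nonLitMass z :=
  Finset.sum_nonneg fun _ _ => hz.1 _

lemma sum_inl_eq_one_sub_nonLitMass (hz : z ∈ simplex (SVStrat n m)) :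
    ∑ b : Lit n, z (Sum.inl b) = 1 - nonLitMass z := by
  rw [← hz.2, Fintype.sum_sum_type, nonLitMass]
  ring

lemma clash_nonneg (hx : x ∈ simplex (SVStrat n m)) (hy : y ∈ simplex (SVStrat n m)) :
    0 ≤ clash x y :=
  Finset.sum_nonneg fun _ _ => mul_nonneg (hx.1 _) (hy.1 _)

lemma clash_comm (x y : SVStrat n m → ℝ) : clash y x = clash x y :=
  Fintype.sum_equiv (negLit_involutive.toPerm _) _ _ fun _ => by simp [mul_comm]

lemma add_le_clash (hx : x ∈ simplex (SVStrat n m)) (hy : y ∈ simplex (SVStrat n m))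
    (l : Lit n) :
    x (Sum.inl l) * y (Sum.inl (negLit l)) + x (Sum.inl (negLit l)) * y (Sum.inl l)
      ≤ clash x y := by
  have h := Finset.sum_le_sum_of_subset_of_nonneg
    (f := fun a : Lit n => x (Sum.inl a) * y (Sum.inl (negLit a)))
    (Finset.subset_univ {l, negLit l}) fun _ _ _ => mul_nonneg (hx.1 _) (hy.1 _)
  rwa [Finset.sum_pair (negLit_ne l).symm, negLit_negLit] at h

variable (φ : CNF3 n m)

lemma payoff_svU2 (x y : SVStrat n m → ℝ) : payoff (svU2 φ) x y = payoff (svU1 φ) y x :=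
  payoff_transpose _ _ _

lemma sum_mul_svU1_inl (hz : z ∈ simplex (SVStrat n m)) (a : Lit n) :
    ∑ j, z j * svU1 φ (Sum.inl a) j
      = n - 1 - 3 * nonLitMass z - 3 * z (Sum.inl (negLit a)) := by
  have hlit : ∀ b : Lit n, z (Sum.inl b) * svU1 φ (Sum.inl a) (Sum.inl b)
      = (n - 1) * z (Sum.inl b) - if b = negLit a then 3 * z (Sum.inl b) else 0 := by
    intro b
    simp only [svU1, eq_comm (a := a), negLit_involutive.eq_iff]
    split_ifs <;> ring
  rw [Fintype.sum_sum_type, Finset.sum_congr rfl fun b _ => hlit b, Finset.sum_sub_distrib,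
    ← Finset.mul_sum, Finset.sum_ite_eq', sum_inl_eq_one_sub_nonLitMass hz]
  simp only [svU1, Finset.mem_univ, if_true, nonLitMass, ← Finset.sum_mul]
  ring

lemma sum_mul_svU1_var (hz : z ∈ simplex (SVStrat n m)) (l : Lit n) :
    ∑ j, z j * svU1 φ (Sum.inr (Sum.inl l.1)) j
      = n - 4 * nonLitMass z - n * (z (Sum.inl l) + z (Sum.inl (negLit l))) := by
  have hlit : ∀ b : Lit n, z (Sum.inl b) * svU1 φ (Sum.inr (Sum.inl l.1)) (Sum.inl b)
      = n * z (Sum.inl b) - n * if b.1 = l.1 then z (Sum.inl b) else 0 := by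
    intro b
    simp only [svU1]
    split_ifs <;> ring
  rw [Fintype.sum_sum_type, Finset.sum_congr rfl fun b _ => hlit b, Finset.sum_sub_distrib,
    ← Finset.mul_sum, ← Finset.mul_sum, ← Finset.sum_filter, filter_fst_eq_pair_negLit,
    Finset.sum_pair (negLit_ne l).symm, sum_inl_eq_one_sub_nonLitMass hz]
  simp only [svU1, nonLitMass, ← Finset.sum_mul]
  ring

lemma sum_mul_svU1_clause_le (hz : z ∈ simplex (SVStrat n m)) (c : Fin m) :
    ∑ j, z j * svU1 φ (Sum.inr (Sum.inr c)) j ≤ n - 4 * nonLitMass z := by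
  have hlit : ∑ b : Lit n, z (Sum.inl b) * svU1 φ (Sum.inr (Sum.inr c)) (Sum.inl b)
      ≤ n * (1 - nonLitMass z) := by
    rw [← sum_inl_eq_one_sub_nonLitMass hz, Finset.mul_sum]
    refine Finset.sum_le_sum fun b _ => ?_
    simp only [svU1]
    split_ifs
    · simpa using mul_nonneg (Nat.cast_nonneg n) (hz.1 _)
    · rw [mul_comm]
  rw [Fintype.sum_sum_type]
  simp only [svU1, nonLitMass, ← Finset.sum_mul] at hlit ⊢
  linarith

lemma sum_mul_svU1_inr_le (hz : z ∈ simplex (SVStrat n m)) (r : Fin n ⊕ Fin m) :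
    ∑ j, z j * svU1 φ (Sum.inr r) j ≤ n - 4 * nonLitMass z := by
  rcases r with w | c
  · have hpair : 0 ≤ (n : ℝ) * (z (Sum.inl (w, true)) + z (Sum.inl (negLit (w, true)))) :=
      mul_nonneg (Nat.cast_nonneg n) (add_nonneg (hz.1 _) (hz.1 _))
    linarith [sum_mul_svU1_var φ hz (w, true)]
  · exact sum_mul_svU1_clause_le φ hz c

lemma payoff_svU1_le (hx : x ∈ simplex (SVStrat n m)) (hy : y ∈ simplex (SVStrat n m)) :
    payoff (svU1 φ) x y ≤ n - 1 - 3 * nonLitMass y + nonLitMass x - 3 * clash x y := by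
  have hlit : ∑ a : Lit n, x (Sum.inl a) * ∑ j, y j * svU1 φ (Sum.inl a) j
      = (n - 1 - 3 * nonLitMass y) * (1 - nonLitMass x) - 3 * clash x y := by
    calc _ = ∑ a : Lit n, ((n - 1 - 3 * nonLitMass y) * x (Sum.inl a)
              - 3 * (x (Sum.inl a) * y (Sum.inl (negLit a)))) :=
          Finset.sum_congr rfl fun a _ => by rw [sum_mul_svU1_inl φ hy]; ring
      _ = _ := by
        rw [Finset.sum_sub_distrib, ← Finset.mul_sum, ← Finset.mul_sum,
          sum_inl_eq_one_sub_nonLitMass hx, clash]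
  have hrest : ∑ r : Fin n ⊕ Fin m, x (Sum.inr r) * ∑ j, y j * svU1 φ (Sum.inr r) j
      ≤ nonLitMass x * (n - 4 * nonLitMass y) := by
    rw [nonLitMass, Finset.sum_mul]
    exact Finset.sum_le_sum fun r _ =>
      mul_le_mul_of_nonneg_left (sum_mul_svU1_inr_le φ hy r) (hx.1 _)
  have hprod := mul_nonneg (nonLitMass_nonneg hx) (nonLitMass_nonneg hy)
  rw [payoff_eq_sum_mul_sum, Fintype.sum_sum_type, hlit]
  linarith

lemma nonLitMass_add_clash_le {ε : ℝ} (hx : x ∈ simplex (SVStrat n m))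
    (hy : y ∈ simplex (SVStrat n m)) (hU₁ : n - 1 - ε ≤ payoff (svU1 φ) x y)
    (hU₂ : n - 1 - ε ≤ payoff (svU2 φ) x y) :
    nonLitMass x + nonLitMass y + 3 * clash x y ≤ ε := by
  have h₁ := payoff_svU1_le φ hx hy
  have h₂ := payoff_svU1_le φ hy hx
  rw [payoff_svU2] at hU₂
  rw [clash_comm] at h₂
  linarith

lemma pair_mass_ge {ε : ℝ} (hNash : IsEpsNash (svU1 φ) (svU2 φ) x y ε)
    (hU₁ : n - 1 - ε ≤ payoff (svU1 φ) x y) (hU₂ : n - 1 - ε ≤ payoff (svU2 φ) x y)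
    (l : Lit n) : 1 - 2 * ε ≤ n * (y (Sum.inl l) + y (Sum.inl (negLit l))) := by
  obtain ⟨hx, hy, hrow, -⟩ := hNash
  have hdev := hrow (Sum.inr (Sum.inl l.1))
  rw [payoff_pureStrat_left, sum_mul_svU1_var φ hy] at hdev
  linarith [payoff_svU1_le φ hx hy, nonLitMass_add_clash_le φ hx hy hU₁ hU₂,
    clash_nonneg hx hy]

theorem literal_dichotomy (hn : 2 ≤ n) {ε : ℝ} (hε : ε = 1 / (2 * (n : ℝ) ^ 3))
    (hNash : IsEpsNash (svU1 φ) (svU2 φ) x y ε)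
    (hU₁ : n - 1 - ε ≤ payoff (svU1 φ) x y) (hU₂ : n - 1 - ε ≤ payoff (svU2 φ) x y)
    (l : Lit n) :
    (1 / (n : ℝ) - 2 * ε - 1 / (n : ℝ) ^ 2 ≤ y (Sum.inl l) ∧
        y (Sum.inl (negLit l)) < 1 / (n : ℝ) ^ 2) ∨
      (1 / (n : ℝ) - 2 * ε - 1 / (n : ℝ) ^ 2 ≤ y (Sum.inl (negLit l)) ∧
        y (Sum.inl l) < 1 / (n : ℝ) ^ 2) := by
  have hx := hNash.1
  have hy := hNash.2.1
  have hNash' : IsEpsNash (svU1 φ) (svU2 φ) y x ε := hNash.symm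
  refine dichotomy_of_clash_le (by exact_mod_cast hn) hε (hx.1 _) (hx.1 _)
    (pair_mass_ge φ hNash hU₁ hU₂ l)
    (pair_mass_ge φ hNash' (by rwa [payoff_svU2] at hU₂) (by rwa [payoff_svU2]) l) ?_
  linarith [add_le_clash hx hy l, nonLitMass_add_clash_le φ hx hy hU₁ hU₂,
    nonLitMass_nonneg hx, nonLitMass_nonneg hy]

end SV

theorem stmt15 {n m : ℕ} (hn : 4 ≤ n) (φ : CNF3 n m)
    (ε : ℝ) (hε : ε = 1 / (2 * (n : ℝ) ^ 3))
    (x y : SVStrat n m → ℝ)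
    (hNash : IsEpsNash (svU1 φ) (svU2 φ) x y ε)
    (hx : (n : ℝ) - 1 - ε ≤ payoff (svU1 φ) x y)
    (hy : (n : ℝ) - 1 - ε ≤ payoff (svU2 φ) x y) :
    ∀ l : Lit n,
      ((1 / (n : ℝ) - 2 * ε - 1 / (n : ℝ) ^ 2 ≤ x (Sum.inl l) ∧
          x (Sum.inl (negLit l)) < 1 / (n : ℝ) ^ 2) ∨
        (1 / (n : ℝ) - 2 * ε - 1 / (n : ℝ) ^ 2 ≤ x (Sum.inl (negLit l)) ∧
          x (Sum.inl l) < 1 / (n : ℝ) ^ 2)) ∧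
      ((1 / (n : ℝ) - 2 * ε - 1 / (n : ℝ) ^ 2 ≤ y (Sum.inl l) ∧
          y (Sum.inl (negLit l)) < 1 / (n : ℝ) ^ 2) ∨
        (1 / (n : ℝ) - 2 * ε - 1 / (n : ℝ) ^ 2 ≤ y (Sum.inl (negLit l)) ∧
          y (Sum.inl l) < 1 / (n : ℝ) ^ 2)) := by
  have hn' : 2 ≤ n := by omega
  have hNash' : IsEpsNash (svU1 φ) (svU2 φ) y x ε := hNash.symm
  intro l
  exact ⟨SV.literal_dichotomy φ hn' hε hNash' (by rwa [SV.payoff_svU2] at hy)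
      (by rwa [SV.payoff_svU2]) l,
    SV.literal_dichotomy φ hn' hε hNash hx hy l⟩
end
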